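/- arXiv:1512.07809 — 4 statements merged into one kernel-verified Lean document; each statement's English description precedes it below -/
import Mathlib

section
/- Let S = ℝ×(-1,1) and T = S \ (((-∞,-1] ∪ [1,+∞))×{0}), i.e. T is the open strip with the two horizontal rays {(x,0) : x ≤ -1} and {(x,0) : x ≥ 1} removed. Then there exists a homeomorphism h : S → T which preserves horizontal lines, i.e. h(x,y) = (α(x,y), y) for some continuous function α : S → ℝ, and which is equal to the identity outside ℝ×(-1/2, 1/2). -/
noncomputable def lam (y : ℝ) : ℝ := max 0 (1 - 2*|y|)

noncomputable def ff (l x : ℝ) : ℝ := (1-l)*x + l*x/(1+|x|)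

noncomputable def gg (l v : ℝ) : ℝ :=
  2*v / ((1-|v|) + Real.sqrt ((1-|v|)^2 + 4*(1-l)*|v|))

lemma lam_nonneg (y : ℝ) : 0 ≤ lam y := le_max_left _ _

lemma lam_le_one (y : ℝ) : lam y ≤ 1 := by
  unfold lam
  have := abs_nonneg y
  apply max_le <;> linarith

lemma lam_zero : lam 0 = 1 := by norm_num [lam]

lemma lam_eq_one (y : ℝ) (h : lam y = 1) : y = 0 := by
  by_contra hy
  have h0 : 0 < |y| := abs_pos.mpr hy
  have : lam y < 1 := by
    unfold lam
    apply max_lt <;> linarith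
  linarith [this.ne h]

lemma lam_half (y : ℝ) (h : (1:ℝ)/2 ≤ |y|) : lam y = 0 := by
  unfold lam
  apply max_eq_left
  linarith

lemma continuous_lam : Continuous lam := by
  unfold lam
  exact continuous_const.max (continuous_const.sub (continuous_const.mul continuous_abs))

lemma ff_odd (l x : ℝ) : ff l (-x) = -(ff l x) := by
  unfold ff
  rw [abs_neg]
  ring

lemma gg_odd (l v : ℝ) : gg l (-v) = -(gg l v) := by
  unfold gg
  rw [abs_neg]
  ring

lemma ff_one_lt (x : ℝ) : |ff 1 x| < 1 := by
  unfold ff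
  have h1 : (0:ℝ) < 1 + |x| := by positivity
  rw [show (1:ℝ)-1 = 0 by ring, zero_mul, zero_add, one_mul, abs_div,
    abs_of_pos h1, div_lt_one h1]
  linarith

lemma ff_zero (x : ℝ) : ff 0 x = x := by
  unfold ff; ring

/-- positivity of the denominator of `gg` -/
lemma dpos (l w : ℝ) (hl0 : 0 ≤ l) (hl1 : l ≤ 1) (hw : 0 ≤ w) (h1 : l = 1 → w < 1) :
    0 < (1-w) + Real.sqrt ((1-w)^2 + 4*(1-l)*w) := by
  have harg : 0 ≤ (1-w)^2 + 4*(1-l)*w := by nlinarith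
  have hs0 : 0 ≤ Real.sqrt ((1-w)^2 + 4*(1-l)*w) := Real.sqrt_nonneg _
  have hs2 : (Real.sqrt ((1-w)^2 + 4*(1-l)*w))^2 = (1-w)^2 + 4*(1-l)*w :=
    Real.sq_sqrt harg
  rcases lt_or_ge w 1 with hw1 | hw1
  · linarith
  · -- w ≥ 1, so l < 1
    have hl : l < 1 := by
      rcases lt_or_eq_of_le hl1 with h | h
      · exact h
      · exact absurd (h1 h) (not_lt.mpr hw1)
    have hwpos : 0 < w := by linarith
    set s := Real.sqrt ((1-w)^2 + 4*(1-l)*w) with hs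
    have h4 : 0 < 4*(1-l)*w := mul_pos (by linarith) hwpos
    nlinarith [sq_nonneg (s - (w-1)), sq_nonneg (s + (w-1))]

lemma gf_core (l x : ℝ) (hl0 : 0 ≤ l) (hl1 : l ≤ 1) (hx : 0 ≤ x) :
    gg l (ff l x) = x := by
  have h1 : (0:ℝ) < 1 + x := by linarith
  have habs : |x| = x := abs_of_nonneg hx
  have hv : ff l x = ((1-l)*x^2 + x)/(1+x) := by
    unfold ff; rw [habs]; field_simp; ring
  set v := ff l x with hvdef
  have hv0 : 0 ≤ v := by
    rw [hv]; apply div_nonneg _ (le_of_lt h1); nlinarith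
  have hvabs : |v| = v := abs_of_nonneg hv0
  have key : (1-v)^2 + 4*(1-l)*v = (2*(1-l)*x + 1 - v)^2 := by
    rw [hv]; field_simp; ring
  have hpos : 0 ≤ 2*(1-l)*x + 1 - v := by
    have heq : 2*(1-l)*x + 1 - v = ((1-l)*x^2 + 2*(1-l)*x + 1)/(1+x) := by
      rw [hv]; field_simp; ring
    rw [heq]
    apply div_nonneg _ (le_of_lt h1)
    nlinarith
  have hsqrt : Real.sqrt ((1-v)^2 + 4*(1-l)*v) = 2*(1-l)*x + 1 - v := by
    rw [key, Real.sqrt_sq hpos]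
  have hden : 0 < 1 - v + (1-l)*x := by
    have heq : 1 - v + (1-l)*x = (1 + (1-l)*x)/(1+x) := by
      rw [hv]; field_simp; ring
    rw [heq]
    apply div_pos _ h1
    nlinarith
  unfold gg
  rw [hvabs, hsqrt]
  have : (1 - v + (2*(1-l)*x + 1 - v)) = 2*(1 - v + (1-l)*x) := by ring
  rw [this, div_eq_iff (by linarith)]
  have hveq : v * (1+x) = (1-l)*x^2 + x := by
    rw [hv]; field_simp
  nlinarith [hveq]

lemma gf (l x : ℝ) (hl0 : 0 ≤ l) (hl1 : l ≤ 1) : gg l (ff l x) = x := by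
  rcases le_total 0 x with hx | hx
  · exact gf_core l x hl0 hl1 hx
  · have := gf_core l (-x) hl0 hl1 (by linarith)
    rw [ff_odd, gg_odd] at this
    linarith

lemma fg_core (l v : ℝ) (hl0 : 0 ≤ l) (hl1 : l ≤ 1) (hv : 0 ≤ v)
    (h1 : l = 1 → v < 1) : ff l (gg l v) = v := by
  have hvabs : |v| = v := abs_of_nonneg hv
  have harg : 0 ≤ (1-v)^2 + 4*(1-l)*v := by nlinarith
  set s := Real.sqrt ((1-v)^2 + 4*(1-l)*v) with hsdef
  have hs0 : 0 ≤ s := Real.sqrt_nonneg _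
  have hs2 : s^2 = (1-v)^2 + 4*(1-l)*v := Real.sq_sqrt harg
  have hd : 0 < (1-v) + s := dpos l v hl0 hl1 hv h1
  have hx : gg l v = 2*v/((1-v)+s) := by
    unfold gg; rw [hvabs]
  set x := gg l v with hxdef
  have hx0 : 0 ≤ x := by
    rw [hx]; positivity
  have hxabs : |x| = x := abs_of_nonneg hx0
  have hxd : x * ((1-v)+s) = 2*v := by
    rw [hx]; field_simp
  have hxs : x*s = 2*v - x*(1-v) := by linarith [hxd]
  have hq : v * ((1-l)*x^2 + (1-v)*x - v) = 0 := by
    linear_combination ((x*s + 2*v - x*(1-v))/4) * hxs - (x^2/4) * hs2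
  rcases eq_or_lt_of_le hv with hv0 | hv0
  · have hxz : x = 0 := by rw [hx, ← hv0]; simp
    rw [hxz, ← hv0]
    unfold ff; simp
  · have hq2 : (1-l)*x^2 + (1-v)*x - v = 0 := by
      rcases mul_eq_zero.mp hq with h | h
      · exact absurd h.symm hv0.ne
      · exact h
    unfold ff
    rw [hxabs]
    have h1x : (0:ℝ) < 1 + x := by linarith
    field_simp
    nlinarith [hq2]

lemma fg (l v : ℝ) (hl0 : 0 ≤ l) (hl1 : l ≤ 1) (h1 : l = 1 → |v| < 1) :
    ff l (gg l v) = v := by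
  rcases le_total 0 v with hv | hv
  · exact fg_core l v hl0 hl1 hv (fun h => (abs_lt.mp (h1 h)).2)
  · have := fg_core l (-v) hl0 hl1 (by linarith)
      (fun h => by have h2 := abs_lt.mp (h1 h); linarith [h2.1])
    rw [gg_odd, ff_odd] at this
    linarith

lemma continuous_ffmap : Continuous (fun p : ℝ × ℝ => ff (lam p.2) p.1) := by
  unfold ff
  apply Continuous.add
  · exact (continuous_const.sub (continuous_lam.comp continuous_snd)).mul continuous_fst
  · apply Continuous.div
    · exact (continuous_lam.comp continuous_snd).mul continuous_fst
    · exact continuous_const.add (continuous_abs.comp continuous_fst)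
    · intro p; positivity

/-- Let `S = ℝ × (-1,1)` and `T = S \ (((-∞,-1] ∪ [1,∞)) × {0})`. Then there is a
homeomorphism `h : S → T` preserving horizontal lines, i.e. `h (x, y) = (α (x, y), y)` for a
continuous `α`, which is the identity outside `ℝ × (-1/2, 1/2)`. -/
theorem stmt_1 :
    let S : Set (ℝ × ℝ) := Set.univ ×ˢ Set.Ioo (-1 : ℝ) 1
    let T : Set (ℝ × ℝ) := S \ ((Set.Iic (-1 : ℝ) ∪ Set.Ici (1 : ℝ)) ×ˢ ({0} : Set ℝ))
    ∃ h : S ≃ₜ T,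
      (∃ α : S → ℝ, Continuous α ∧ ∀ p : S, ((h p : ℝ × ℝ)) = (α p, (p : ℝ × ℝ).2)) ∧
      (∀ p : S, (p : ℝ × ℝ).2 ∉ Set.Ioo (-(1/2) : ℝ) (1/2) → ((h p : ℝ × ℝ)) = (p : ℝ × ℝ)) := by
  intro S T
  -- characterization of membership in T
  have hTmem : ∀ q : ℝ × ℝ, q ∈ T → lam q.2 = 1 → |q.1| < 1 := by
    intro q hq hl
    have hy : q.2 = 0 := lam_eq_one _ hl
    have hnot := hq.2
    rw [abs_lt]
    by_contra hcon
    push_neg at hcon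
    apply hnot
    constructor
    · rcases le_or_gt q.1 (-1) with h | h
      · exact Or.inl h
      · exact Or.inr (hcon h)
    · exact hy
  -- forward map lands in T
  have hfwd : ∀ p : ℝ × ℝ, p ∈ S → (ff (lam p.2) p.1, p.2) ∈ T := by
    intro p hp
    refine ⟨⟨trivial, hp.2⟩, ?_⟩
    rintro ⟨h1, h2⟩
    simp only [Set.mem_singleton_iff] at h2
    rw [h2, lam_zero] at h1
    have := ff_one_lt p.1
    rw [abs_lt] at this
    rcases h1 with h | h
    · rw [Set.mem_Iic] at h; linarith
    · rw [Set.mem_Ici] at h; linarith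
  -- backward map lands in S
  have hbwd : ∀ q : ℝ × ℝ, q ∈ T → (gg (lam q.2) q.1, q.2) ∈ S := by
    intro q hq
    exact ⟨trivial, hq.1.2⟩
  -- the homeomorphism
  refine ⟨⟨⟨fun p => ⟨(ff (lam (p:ℝ×ℝ).2) (p:ℝ×ℝ).1, (p:ℝ×ℝ).2), hfwd _ p.2⟩,
      fun q => ⟨(gg (lam (q:ℝ×ℝ).2) (q:ℝ×ℝ).1, (q:ℝ×ℝ).2), hbwd _ q.2⟩, ?_, ?_⟩, ?_, ?_⟩,
      ?_, ?_⟩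
  · -- left inverse
    intro p
    ext
    · exact gf _ _ (lam_nonneg _) (lam_le_one _)
    · rfl
  · -- right inverse
    intro q
    ext
    · exact fg _ _ (lam_nonneg _) (lam_le_one _) (hTmem _ q.2)
    · rfl
  · -- continuity of toFun
    apply Continuous.subtype_mk
    exact (continuous_ffmap.comp continuous_subtype_val).prodMk
      (continuous_snd.comp continuous_subtype_val)
  · -- continuity of invFun
    apply Continuous.subtype_mk
    have hcg : ContinuousOn (fun q : ℝ × ℝ => gg (lam q.2) q.1) T := by
      intro q hq
      apply ContinuousAt.continuousWithinAt
      unfold gg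
      apply ContinuousAt.div
      · exact (continuous_const.mul continuous_fst).continuousAt
      · apply ContinuousAt.add
        · exact (continuous_const.sub (continuous_abs.comp continuous_fst)).continuousAt
        · apply Real.continuous_sqrt.continuousAt.comp
          apply ContinuousAt.add
          · exact (((continuous_const.sub (continuous_abs.comp continuous_fst)).pow 2)).continuousAt
          · exact ((continuous_const.mul (continuous_const.sub
              (continuous_lam.comp continuous_snd))).mul
              (continuous_abs.comp continuous_fst)).continuousAt
      · exact ne_of_gt (dpos _ _ (lam_nonneg _) (lam_le_one _) (abs_nonneg _)
          (fun h => hTmem _ hq h))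
    exact (hcg.restrict.prodMk (continuous_snd.comp continuous_subtype_val))
  · -- horizontal-line preservation
    exact ⟨fun p => ff (lam (p:ℝ×ℝ).2) (p:ℝ×ℝ).1,
      continuous_ffmap.comp continuous_subtype_val, fun p => rfl⟩
  · -- identity outside the middle strip
    intro p hp
    have : lam (p:ℝ×ℝ).2 = 0 := by
      apply lam_half
      rw [Set.mem_Ioo, not_and_or] at hp
      push_neg at hp
      rcases hp with h | h
      · rw [abs_of_nonpos (by linarith)]; linarith
      · rw [abs_of_nonneg (by linarith)]; linarith
    show (ff (lam (p:ℝ×ℝ).2) (p:ℝ×ℝ).1, (p:ℝ×ℝ).2) = (p:ℝ×ℝ)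
    rw [this, ff_zero]
end

section
/- Let S = ℝ² and T = ℝ² \ (((-∞,-1] ∪ [1,+∞)) × {2n : n ∈ ℤ}), i.e. the plane with the pair of horizontal rays {(x,2n) : x ≤ -1} and {(x,2n) : x ≥ 1} removed for every integer n. Then there exists a homeomorphism h : S → T which preserves horizontal lines, i.e. h(x,y) = (α(x,y), y) for some continuous function α : ℝ² → ℝ, and which equals the identity outside ℝ × ⋃_{n∈ℤ} (2n − 1/2, 2n + 1/2). -/
/-!
Take `h (x, y) = (squash (evenBump y) x, y)`, where `evenBump y = max 0 (cos (π y))` equals `1`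
exactly on `2ℤ` and vanishes off the strips, and `squash s x = (1 - s) x + s x / (1 + |x|)`
interpolates between the identity (`s = 0`) and a homeomorphism `ℝ ≃ (-1, 1)` (`s = 1`).
The inverse of `squash s` is given by the quadratic formula, and it is jointly continuous in
`(s, a)` wherever `s < 1` or `|a| < 1`, which is exactly the image `T`.
-/

open Real Set

noncomputable def evenBump (y : ℝ) : ℝ := max 0 (cos (π * y))

lemma evenBump_nonneg (y : ℝ) : 0 ≤ evenBump y := le_max_left _ _

lemma evenBump_le_one (y : ℝ) : evenBump y ≤ 1 := max_le zero_le_one (cos_le_one _)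

@[fun_prop]
lemma continuous_evenBump : Continuous evenBump := by unfold evenBump; fun_prop

lemma evenBump_eq_one_iff {y : ℝ} : evenBump y = 1 ↔ ∃ n : ℤ, y = 2 * n := by
  have hcos : evenBump y = 1 ↔ cos (π * y) = 1 := by
    unfold evenBump; constructor <;> intro h
    · exact (max_eq_iff.1 h).resolve_left (fun h => zero_ne_one h.1) |>.1
    · simp [h]
  rw [hcos, cos_eq_one_iff]
  refine exists_congr fun n => ⟨fun h => ?_, fun h => by rw [h]; ring⟩
  nlinarith [pi_pos]

lemma evenBump_eq_zero {y : ℝ}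
    (hy : ∀ n : ℤ, y ∉ Ioo (2 * (n : ℝ) - 1 / 2) (2 * n + 1 / 2)) : evenBump y = 0 := by
  set n := round (y / 2)
  set z := y - 2 * n
  have hz : |z| ≤ 1 := by
    have := abs_sub_round (y / 2)
    rw [abs_le] at this ⊢; constructor <;> linarith [this.1, this.2]
  have hz' : 1 / 2 ≤ |z| := by
    by_contra! h
    rw [abs_lt] at h
    exact hy n ⟨by linarith [h.1], by linarith [h.2]⟩
  -- periodicity and evenness of `cos`
  have hcos : cos (π * y) = cos (π * |z|) := by
    rw [show π * |z| = |π * z| by rw [abs_mul, abs_of_pos pi_pos], cos_abs,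
      show π * y = π * z + n * (2 * π) by ring, cos_add_int_mul_two_pi]
  have : cos (π * y) ≤ 0 := by
    rw [hcos]; apply cos_nonpos_of_pi_div_two_le_of_le <;> nlinarith [pi_pos]
  simp [evenBump, this]

noncomputable def squash (s x : ℝ) : ℝ := (1 - s) * x + s * (x / (1 + |x|))

/-- For `x ≥ 0`, `squash s x = a` means `(1 - s) x² + (1 - a) x - a = 0`; this is the
nonnegative root, with the numerator rationalised so that it still makes sense at `s = 1`. -/
noncomputable def unsquash (s a : ℝ) : ℝ :=
  2 * a / (√((1 - |a|) ^ 2 + 4 * (1 - s) * |a|) + 1 - |a|)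

lemma squash_zero_left (x : ℝ) : squash 0 x = x := by simp [squash]

lemma squash_neg (s x : ℝ) : squash s (-x) = -squash s x := by
  simp only [squash, abs_neg]; ring

lemma unsquash_neg (s a : ℝ) : unsquash s (-a) = -unsquash s a := by
  simp only [unsquash, abs_neg]; ring

lemma continuous_squash : Continuous fun p : ℝ × ℝ => squash p.1 p.2 := by
  unfold squash
  have : ∀ p : ℝ × ℝ, 1 + |p.2| ≠ 0 := fun p => by positivity
  fun_prop (disch := exact this _)

lemma abs_squash_one_lt (x : ℝ) : |squash 1 x| < 1 := by
  have h : 0 < 1 + |x| := by positivity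
  rw [squash, sub_self, zero_mul, zero_add, one_mul, abs_div, abs_of_pos h, div_lt_one h]
  linarith

lemma unsquash_denom_pos {s a : ℝ} (h : s < 1 ∨ |a| < 1) :
    0 < √((1 - |a|) ^ 2 + 4 * (1 - s) * |a|) + 1 - |a| := by
  rcases lt_or_ge |a| 1 with ha | ha
  · linarith [sqrt_nonneg ((1 - |a|) ^ 2 + 4 * (1 - s) * |a|)]
  · have hs : s < 1 := h.resolve_right ha.not_gt
    have : |a| - 1 < √((1 - |a|) ^ 2 + 4 * (1 - s) * |a|) :=
      lt_sqrt_of_sq_lt (by nlinarith)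
    linarith

lemma squash_eq_iff_quadratic {s x a : ℝ} (hx : 0 ≤ x) :
    squash s x = a ↔ (1 - s) * x ^ 2 + (1 - a) * x - a = 0 := by
  have h : 1 + x ≠ 0 := by positivity
  rw [squash, abs_of_nonneg hx]
  constructor
  · rintro rfl; field_simp; ring
  · intro hq; field_simp; linear_combination hq

lemma unsquash_squash_of_nonneg {s x : ℝ} (hs0 : 0 ≤ s) (hs1 : s ≤ 1) (hx : 0 ≤ x) :
    unsquash s (squash s x) = x := by
  set a := squash s x with ha
  have hq := (squash_eq_iff_quadratic hx).1 ha.symm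
  have hsx : s * (x / (1 + x)) < 1 := by
    have : x / (1 + x) < 1 := (div_lt_one (by positivity)).2 (by linarith)
    nlinarith [div_nonneg hx (by positivity : (0 : ℝ) ≤ 1 + x)]
  have hpos : 0 < 1 - a + (1 - s) * x := by
    rw [ha, squash, abs_of_nonneg hx]; linarith
  have haa : |a| = a := abs_of_nonneg (by
    rw [ha, squash, abs_of_nonneg hx]; positivity)
  have hsqrt : √((1 - a) ^ 2 + 4 * (1 - s) * a) = 1 - a + 2 * (1 - s) * x := by
    rw [sqrt_eq_iff_mul_self_eq_of_pos (by nlinarith)]; linear_combination 4 * (1 - s) * hq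
  rw [unsquash, haa, hsqrt, div_eq_iff (by linarith)]
  linear_combination (-2) * hq

lemma squash_unsquash_of_nonneg {s a : ℝ} (hs : s ≤ 1) (ha : 0 ≤ a) (h : s < 1 ∨ |a| < 1) :
    squash s (unsquash s a) = a := by
  have hD := unsquash_denom_pos h
  rw [abs_of_nonneg ha] at hD
  have hx : 0 ≤ unsquash s a := by rw [unsquash, abs_of_nonneg ha]; positivity
  rw [squash_eq_iff_quadratic hx, unsquash, abs_of_nonneg ha]
  have hr : √((1 - a) ^ 2 + 4 * (1 - s) * a) ^ 2 = (1 - a) ^ 2 + 4 * (1 - s) * a :=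
    sq_sqrt (by nlinarith)
  generalize √((1 - a) ^ 2 + 4 * (1 - s) * a) = r at hr hD
  field_simp
  linear_combination (-a) * hr

lemma unsquash_squash {s : ℝ} (hs0 : 0 ≤ s) (hs1 : s ≤ 1) (x : ℝ) :
    unsquash s (squash s x) = x := by
  rcases le_total 0 x with hx | hx
  · exact unsquash_squash_of_nonneg hs0 hs1 hx
  · simpa [squash_neg, unsquash_neg] using unsquash_squash_of_nonneg hs0 hs1 (neg_nonneg.2 hx)

lemma squash_unsquash {s a : ℝ} (hs : s ≤ 1) (h : s < 1 ∨ |a| < 1) :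
    squash s (unsquash s a) = a := by
  rcases le_total 0 a with ha | ha
  · exact squash_unsquash_of_nonneg hs ha h
  · simpa [squash_neg, unsquash_neg] using
      squash_unsquash_of_nonneg hs (neg_nonneg.2 ha) (by rwa [abs_neg])

lemma continuousOn_unsquash :
    ContinuousOn (fun p : ℝ × ℝ => unsquash p.1 p.2) {p | p.1 < 1 ∨ |p.2| < 1} := by
  unfold unsquash
  exact .div (by fun_prop) (by fun_prop) fun p hp => (unsquash_denom_pos hp).ne'

def planeMinusRays : Set (ℝ × ℝ) :=
  (⋃ n : ℤ, (Iic (-1 : ℝ) ∪ Ici (1 : ℝ)) ×ˢ ({(2 * (n : ℝ))} : Set ℝ))ᶜ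

lemma mem_planeMinusRays_iff {p : ℝ × ℝ} :
    p ∈ planeMinusRays ↔ evenBump p.2 < 1 ∨ |p.1| < 1 := by
  rw [← not_le, ← not_le (b := |p.1|), ← not_and_or, (evenBump_le_one _).ge_iff_eq,
    evenBump_eq_one_iff, le_abs', planeMinusRays, mem_compl_iff]
  simp only [mem_iUnion, mem_prod, mem_union, mem_Iic, mem_Ici, mem_singleton_iff,
    exists_and_left, and_comm]

noncomputable def squashHomeomorph : (ℝ × ℝ) ≃ₜ planeMinusRays where
  toFun p := ⟨(squash (evenBump p.2) p.1, p.2), mem_planeMinusRays_iff.2 <| by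
    rcases (evenBump_le_one p.2).lt_or_eq with h | h
    · exact .inl h
    · exact .inr (h ▸ abs_squash_one_lt p.1)⟩
  invFun q := (unsquash (evenBump q.1.2) q.1.1, q.1.2)
  left_inv p := Prod.ext (unsquash_squash (evenBump_nonneg _) (evenBump_le_one _) p.1) rfl
  right_inv q := Subtype.ext <| Prod.ext
    (squash_unsquash (evenBump_le_one _) (mem_planeMinusRays_iff.1 q.2)) rfl
  continuous_toFun := by
    refine .subtype_mk (.prodMk ?_ continuous_snd) _
    exact continuous_squash.comp ((continuous_evenBump.comp continuous_snd).prodMk continuous_fst)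
  continuous_invFun := .prodMk
    (continuousOn_unsquash.comp_continuous (f := fun q : planeMinusRays => (evenBump q.1.2, q.1.1))
      (by fun_prop) fun q => mem_planeMinusRays_iff.1 q.2)
    (by fun_prop)

/-- Let `T` be the plane with the horizontal rays `{(x, 2n) : x ≤ -1}` and
`{(x, 2n) : x ≥ 1}` removed for every integer `n`. Then there is a homeomorphism `h : ℝ² → T`
preserving horizontal lines, i.e. `h (x, y) = (α (x, y), y)` with `α` continuous, which is the
identity outside `ℝ × ⋃_{n ∈ ℤ} (2n - 1/2, 2n + 1/2)`. -/
theorem stmt_3 :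
    let T : Set (ℝ × ℝ) :=
      (⋃ n : ℤ, (Set.Iic (-1 : ℝ) ∪ Set.Ici (1 : ℝ)) ×ˢ ({(2 * (n : ℝ))} : Set ℝ))ᶜ
    ∃ h : (ℝ × ℝ) ≃ₜ T,
      (∃ α : ℝ × ℝ → ℝ, Continuous α ∧ ∀ p : ℝ × ℝ, ((h p : ℝ × ℝ)) = (α p, p.2)) ∧
      (∀ p : ℝ × ℝ,
        (∀ n : ℤ, p.2 ∉ Set.Ioo (2 * (n : ℝ) - 1/2) (2 * (n : ℝ) + 1/2)) →
        ((h p : ℝ × ℝ)) = p) := by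
  refine ⟨squashHomeomorph, ⟨fun p => (squashHomeomorph p : ℝ × ℝ).1,
    (continuous_subtype_val.comp squashHomeomorph.continuous).fst, fun _ => rfl⟩,
    fun p hp => ?_⟩
  show (squash (evenBump p.2) p.1, p.2) = p
  rw [evenBump_eq_zero hp, squash_zero_left]
end

section
/- Let S ⊆ ℝ×[-1,1] be a model strip and let g : S → S be a homeomorphism which maps every leaf of the canonical foliation of S onto a leaf of the canonical foliation. Then g(x,y) = (λ(x,y), μ(y)) for all (x,y) ∈ S, where μ : [-1,1] → [-1,1] is a homeomorphism (restricting to a homeomorphism of (-1,1)), and λ : S → ℝ is a continuous function such that for each y ∈ (-1,1) the map x ↦ λ(x,y) is a homeomorphism of ℝ onto ℝ. -/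
/-- A *model strip* is a subset `S ⊆ ℝ × [-1,1]` containing `ℝ × (-1,1)` whose intersection with
`ℝ × {-1,1}` is a (possibly empty) union of open bounded intervals `(a,b) × {ε}` (`ε ∈ {-1,1}`)
with pairwise disjoint closures. -/
def IsModelStrip (S : Set (ℝ × ℝ)) : Prop :=
  Set.univ ×ˢ Set.Ioo (-1 : ℝ) 1 ⊆ S ∧
  S ⊆ Set.univ ×ˢ Set.Icc (-1 : ℝ) 1 ∧
  ∃ I : Set (Set (ℝ × ℝ)),
    S ∩ (Set.univ ×ˢ ({-1, 1} : Set ℝ)) = ⋃₀ I ∧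
    (∀ J ∈ I, ∃ a b ε : ℝ, a < b ∧ (ε = -1 ∨ ε = 1) ∧ J = Set.Ioo a b ×ˢ ({ε} : Set ℝ)) ∧
    (∀ J ∈ I, ∀ K ∈ I, J ≠ K → closure J ∩ closure K = ∅)

/-- The leaves of the canonical foliation of a model strip `S`: the horizontal lines `ℝ × {y}`
for `y ∈ (-1,1)`, together with the connected components of `S ∩ (ℝ × {-1,1})`. -/
def IsLeaf (S : Set (ℝ × ℝ)) (L : Set (ℝ × ℝ)) : Prop :=
  (∃ y ∈ Set.Ioo (-1 : ℝ) 1, L = Set.univ ×ˢ ({y} : Set ℝ)) ∨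
  (∃ p ∈ S ∩ (Set.univ ×ˢ ({-1, 1} : Set ℝ)),
    L = connectedComponentIn (S ∩ (Set.univ ×ˢ ({-1, 1} : Set ℝ))) p)

/-!
The interior leaves `ℝ × {y}` are exactly the leaves whose complement in `S` is disconnected: a
boundary leaf lies in `ℝ × {-1,1}`, so its complement lies between `ℝ × (-1,1)` and its closure.
A homeomorphism of `S` preserves connectedness of complements, so `g` permutes the interior lines
and keeps boundary points on the boundary. This gives a continuous bijection `μ` of `(-1,1)`,
which is therefore strictly monotone or antitone and extends to such a bijection of `[-1,1]`; a
monotone bijection of intervals is a homeomorphism. The identity `(g p).2 = μ p.2` passes from the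
dense set of interior points to all of `S`, and on each interior line `x ↦ (g (x, y)).1` is a
continuous bijection of `ℝ`, hence a homeomorphism.
-/

open Set Function

section OrderHomeomorph

variable {α β : Type*} [LinearOrder α] [LinearOrder β] {f : α → β} {g : β → α}
  {s : Set α} {t : Set β}

theorem StrictMonoOn.strictMonoOn_of_invOn (hf : StrictMonoOn f s) (h : InvOn g f s t)
    (hg : MapsTo g t s) : StrictMonoOn g t := fun _ hx _ hy hxy =>
  lt_of_not_ge fun hle => hxy.not_ge <| h.2 hy ▸ h.2 hx ▸ hf.monotoneOn (hg hy) (hg hx) hle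

theorem StrictAntiOn.strictAntiOn_of_invOn (hf : StrictAntiOn f s) (h : InvOn g f s t)
    (hg : MapsTo g t s) : StrictAntiOn g t := fun _ hx _ hy hxy =>
  lt_of_not_ge fun hle => hxy.not_ge <| h.2 hx ▸ h.2 hy ▸ hf.antitoneOn (hg hx) (hg hy) hle

variable [TopologicalSpace α] [OrderTopology α] [TopologicalSpace β] [OrderTopology β]

theorem StrictMonoOn.continuousOn_of_bijOn [s.OrdConnected] [t.OrdConnected]
    (hf : StrictMonoOn f s) (h : BijOn f s t) : ContinuousOn f s := by
  have : (f '' s).OrdConnected := h.image_eq ▸ ‹_›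
  rw [continuousOn_iff_continuous_domRestrict]
  exact continuous_subtype_val.comp (hf.orderIso f s).continuous

theorem StrictAntiOn.continuousOn_of_bijOn [s.OrdConnected] [ht : t.OrdConnected]
    (hf : StrictAntiOn f s) (h : BijOn f s t) : ContinuousOn f s :=
  have := ht.dual
  continuous_ofDual.comp_continuousOn
    (hf.dual_right.continuousOn_of_bijOn (t := OrderDual.ofDual ⁻¹' t) h)

theorem exists_continuousOn_invOn_of_bijOn [Nonempty α] [s.OrdConnected] [t.OrdConnected]
    (hf : StrictMonoOn f s ∨ StrictAntiOn f s) (h : BijOn f s t) :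
    ContinuousOn f s ∧ ∃ g, ContinuousOn g t ∧ InvOn g f s t := by
  have hinv := h.invOn_invFunOn
  have hbij' := h.symm hinv.symm
  rcases hf with hf | hf
  · exact ⟨hf.continuousOn_of_bijOn h, _,
      (hf.strictMonoOn_of_invOn hinv hbij'.mapsTo).continuousOn_of_bijOn hbij', hinv⟩
  · exact ⟨hf.continuousOn_of_bijOn h, _,
      (hf.strictAntiOn_of_invOn hinv hbij'.mapsTo).continuousOn_of_bijOn hbij', hinv⟩

end OrderHomeomorph

theorem Continuous.exists_homeomorph_of_bijective {α δ : Type*}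
    [ConditionallyCompleteLinearOrder α] [TopologicalSpace α] [OrderTopology α] [DenselyOrdered α]
    [LinearOrder δ] [TopologicalSpace δ] [OrderTopology δ] {f : α → δ} (hf : Continuous f)
    (hbij : Bijective f) : ∃ e : α ≃ₜ δ, ⇑e = f := by
  have hmono := (hf.strictMono_of_inj hbij.1).imp (·.strictMonoOn univ) (·.strictAntiOn univ)
  obtain ⟨-, g, hg, hinv⟩ :=
    exists_continuousOn_invOn_of_bijOn hmono hbij.bijOn_univ
  exact ⟨⟨⟨f, g, fun x => hinv.1 (mem_univ x), fun y => hinv.2 (mem_univ y)⟩, hf,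
    continuousOn_univ.1 hg⟩, rfl⟩

theorem StrictMonoOn.piecewise_Ioo_id {α : Type*} [LinearOrder α] {a b : α} {f : α → α}
    (hf : StrictMonoOn f (Ioo a b)) (h : BijOn f (Ioo a b) (Ioo a b)) :
    StrictMonoOn ((Ioo a b).piecewise f id) (Icc a b) ∧
      BijOn ((Ioo a b).piecewise f id) (Icc a b) (Icc a b) := by
  set F := (Ioo a b).piecewise f id
  have hFa : F a = a := piecewise_eq_of_notMem _ _ _ fun h => lt_irrefl a h.1
  have hFb : F b = b := piecewise_eq_of_notMem _ _ _ fun h => lt_irrefl b h.2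
  have hFI : ∀ x ∈ Ioo a b, F x = f x := fun x hx => piecewise_eq_of_mem _ _ _ hx
  have hmono : StrictMonoOn F (Icc a b) := by
    intro x hx y hy hxy
    grind [StrictMonoOn, MapsTo, h.mapsTo, eq_endpoints_or_mem_Ioo_of_mem_Icc]
  refine ⟨hmono, fun x hx => ?_, hmono.injOn, fun y hy => ?_⟩
  · grind [MapsTo, h.mapsTo, eq_endpoints_or_mem_Ioo_of_mem_Icc]
  · rcases eq_endpoints_or_mem_Ioo_of_mem_Icc hy with rfl | rfl | hy'
    · exact ⟨y, hy, hFa⟩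
    · exact ⟨y, hy, hFb⟩
    · obtain ⟨x, hx, rfl⟩ := h.surjOn hy'
      exact ⟨x, Ioo_subset_Icc_self hx, hFI x hx⟩

theorem ContinuousOn.exists_extension_Icc {a b : ℝ} (hab : a < b) {f : ℝ → ℝ}
    (hf : ContinuousOn f (Ioo a b)) (h : BijOn f (Ioo a b) (Ioo a b)) :
    ∃ μ : ℝ → ℝ, EqOn μ f (Ioo a b) ∧ (StrictMonoOn μ (Icc a b) ∨ StrictAntiOn μ (Icc a b)) ∧
      BijOn μ (Icc a b) (Icc a b) := by
  rcases hf.strictMonoOn_of_injOn_Ioo hab h.injOn with hmono | hanti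
  · obtain ⟨hF, hFbij⟩ := hmono.piecewise_Ioo_id h
    exact ⟨_, piecewise_eqOn _ _ _, Or.inl hF, hFbij⟩
  · set σ : ℝ → ℝ := fun y => a + b - y
    have hσσ : ∀ y, σ (σ y) = y := fun y => by simp [σ]
    have hσ : StrictAnti σ := fun x y hxy => by simp only [σ]; linarith
    have hσIoo : BijOn σ (Ioo a b) (Ioo a b) := by
      have hmaps : MapsTo σ (Ioo a b) (Ioo a b) := fun y hy => by
        simp only [σ, mem_Ioo] at hy ⊢; constructor <;> linarith
      exact InvOn.bijOn ⟨fun y _ => hσσ y, fun y _ => hσσ y⟩ hmaps hmaps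
    have hσIcc : BijOn σ (Icc a b) (Icc a b) := by
      have hmaps : MapsTo σ (Icc a b) (Icc a b) := fun y hy => by
        simp only [σ, mem_Icc] at hy ⊢; constructor <;> linarith
      exact InvOn.bijOn ⟨fun y _ => hσσ y, fun y _ => hσσ y⟩ hmaps hmaps
    obtain ⟨hF, hFbij⟩ :=
      (hanti.comp (hσ.strictAntiOn _) hσIoo.mapsTo).piecewise_Ioo_id (h.comp hσIoo)
    refine ⟨_ ∘ σ, fun y hy => ?_, Or.inr (hF.comp_strictAntiOn (hσ.strictAntiOn _) hσIcc.mapsTo),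
      hFbij.comp hσIcc⟩
    simp [piecewise_eq_of_mem _ _ _ (hσIoo.mapsTo hy), hσσ]

theorem Homeomorph.isPreconnected_diff_image_iff {X : Type*} [TopologicalSpace X] {S : Set X}
    (g : S ≃ₜ S) (L : Set X) :
    IsPreconnected (S \ (Subtype.val ∘ g) '' (Subtype.val ⁻¹' L)) ↔ IsPreconnected (S \ L) := by
  rw [image_comp, ← image_val_compl, Topology.IsInducing.subtypeVal.isPreconnected_image,
    ← g.image_compl, g.isPreconnected_image, ← Topology.IsInducing.subtypeVal.isPreconnected_image,
    image_val_compl, Subtype.image_preimage_coe, sdiff_self_inter]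

section Strip

variable {S L : Set (ℝ × ℝ)}

theorem closure_univ_prod_Ioo {X : Type*} [TopologicalSpace X] {a b : ℝ} (hab : a ≠ b) :
    closure (univ ×ˢ Ioo a b : Set (X × ℝ)) = univ ×ˢ Icc a b := by
  rw [closure_prod_eq, closure_univ, closure_Ioo hab]

theorem notMem_Ioo_of_mem_pair {y : ℝ} (hy : y ∈ ({-1, 1} : Set ℝ)) : y ∉ Ioo (-1 : ℝ) 1 := by
  rcases hy with rfl | rfl <;> simp

theorem isPreconnected_diff_of_subset_boundary (hS1 : univ ×ˢ Ioo (-1 : ℝ) 1 ⊆ S)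
    (hS2 : S ⊆ univ ×ˢ Icc (-1 : ℝ) 1) (hL : L ⊆ univ ×ˢ {-1, 1}) : IsPreconnected (S \ L) := by
  refine (isPreconnected_univ.prod isPreconnected_Ioo).subset_closure
    (fun z hz => ⟨hS1 hz, fun hzL => ?_⟩) ?_
  · exact notMem_Ioo_of_mem_pair (hL hzL).2 hz.2
  · rw [closure_univ_prod_Ioo (by norm_num)]
    exact sdiff_subset.trans hS2

theorem not_isPreconnected_diff_horizontal (hS1 : univ ×ˢ Ioo (-1 : ℝ) 1 ⊆ S) {c : ℝ}
    (hc : c ∈ Ioo (-1 : ℝ) 1) : ¬ IsPreconnected (S \ univ ×ˢ {c}) := by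
  intro h
  have hsnd : ∀ y ∈ Ioo (-1 : ℝ) 1, y ≠ c → y ∈ Prod.snd '' (S \ univ ×ˢ {c}) := fun y hy hyc =>
    ⟨(0, y), ⟨hS1 ⟨trivial, hy⟩, fun h => hyc h.2⟩, rfl⟩
  obtain ⟨p, ⟨-, hp⟩, hpc⟩ := (h.image _ continuous_snd.continuousOn).Icc_subset
    (hsnd ((c - 1) / 2) ⟨by linarith [hc.1], by linarith [hc.2]⟩ (by linarith [hc.1]))
    (hsnd ((c + 1) / 2) ⟨by linarith [hc.1], by linarith [hc.2]⟩ (by linarith [hc.2]))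
    (show c ∈ Icc _ _ from ⟨by linarith [hc.1], by linarith [hc.2]⟩)
  exact hp ⟨trivial, hpc⟩

theorem IsLeaf.eq_horizontal_or_subset_boundary (hL : IsLeaf S L) :
    (∃ y ∈ Ioo (-1 : ℝ) 1, L = univ ×ˢ {y}) ∨ L ⊆ univ ×ˢ {-1, 1} :=
  hL.imp_right fun ⟨_, _, hL⟩ => hL ▸ (connectedComponentIn_subset _ _).trans inter_subset_right

theorem IsLeaf.isPreconnected_diff_iff (hS1 : univ ×ˢ Ioo (-1 : ℝ) 1 ⊆ S)
    (hS2 : S ⊆ univ ×ˢ Icc (-1 : ℝ) 1) (hL : IsLeaf S L) :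
    IsPreconnected (S \ L) ↔ L ⊆ univ ×ˢ {-1, 1} := by
  rcases hL.eq_horizontal_or_subset_boundary with ⟨y, hy, rfl⟩ | hL
  · refine iff_of_false (not_isPreconnected_diff_horizontal hS1 hy) fun h => ?_
    exact notMem_Ioo_of_mem_pair (h (mk_mem_prod (mem_univ 0) (mem_singleton y))).2 hy
  · exact iff_of_true (isPreconnected_diff_of_subset_boundary hS1 hS2 hL) hL

theorem dense_setOf_snd_mem_Ioo (hS1 : univ ×ˢ Ioo (-1 : ℝ) 1 ⊆ S)
    (hS2 : S ⊆ univ ×ˢ Icc (-1 : ℝ) 1) : Dense {p : S | (p : ℝ × ℝ).2 ∈ Ioo (-1 : ℝ) 1} := by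
  rw [Topology.IsInducing.subtypeVal.dense_iff]
  have hsub : univ ×ˢ Ioo (-1 : ℝ) 1 ⊆ Subtype.val '' {p : S | (p : ℝ × ℝ).2 ∈ Ioo (-1 : ℝ) 1} :=
    fun z hz => ⟨⟨z, hS1 hz⟩, hz.2, rfl⟩
  have hcl := closure_mono hsub
  rw [closure_univ_prod_Ioo (by norm_num)] at hcl
  exact fun p => hcl (hS2 p.2)

theorem eq_comp_snd_of_eqOn_Ioo (hS1 : univ ×ˢ Ioo (-1 : ℝ) 1 ⊆ S)
    (hS2 : S ⊆ univ ×ˢ Icc (-1 : ℝ) 1) {f : S → ℝ} (hf : Continuous f) {μ : ℝ → ℝ}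
    (hμ : ContinuousOn μ (Icc (-1) 1))
    (h : ∀ p : S, (p : ℝ × ℝ).2 ∈ Ioo (-1 : ℝ) 1 → f p = μ (p : ℝ × ℝ).2) (p : S) :
    f p = μ (p : ℝ × ℝ).2 :=
  congrFun (Continuous.ext_on (dense_setOf_snd_mem_Ioo hS1 hS2) hf
    (hμ.comp_continuous (continuous_snd.comp continuous_subtype_val) fun p => (hS2 p.2).2) h) p

end Strip


def MapsLeaves (S : Set (ℝ × ℝ)) (g : S ≃ₜ S) : Prop :=
  ∀ L, IsLeaf S L → IsLeaf S ((Subtype.val ∘ g) '' (Subtype.val ⁻¹' L))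

namespace MapsLeaves

variable {S L : Set (ℝ × ℝ)} {g : S ≃ₜ S}

theorem image_subset_boundary_iff (hS1 : univ ×ˢ Ioo (-1 : ℝ) 1 ⊆ S)
    (hS2 : S ⊆ univ ×ˢ Icc (-1 : ℝ) 1) (hg : MapsLeaves S g) (hL : IsLeaf S L) :
    (Subtype.val ∘ g) '' (Subtype.val ⁻¹' L) ⊆ univ ×ˢ {-1, 1} ↔ L ⊆ univ ×ˢ {-1, 1} := by
  rw [← (hg L hL).isPreconnected_diff_iff hS1 hS2, ← hL.isPreconnected_diff_iff hS1 hS2,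
    g.isPreconnected_diff_image_iff]

theorem exists_image_horizontal (hS1 : univ ×ˢ Ioo (-1 : ℝ) 1 ⊆ S)
    (hS2 : S ⊆ univ ×ˢ Icc (-1 : ℝ) 1) (hg : MapsLeaves S g) {y : ℝ} (hy : y ∈ Ioo (-1 : ℝ) 1) :
    ∃ c ∈ Ioo (-1 : ℝ) 1, (Subtype.val ∘ g) '' (Subtype.val ⁻¹' (univ ×ˢ {y})) = univ ×ˢ {c} := by
  have hL : IsLeaf S (univ ×ˢ {y}) := Or.inl ⟨y, hy, rfl⟩
  refine (hg _ hL).eq_horizontal_or_subset_boundary.resolve_right fun h => ?_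
  exact notMem_Ioo_of_mem_pair (((hg.image_subset_boundary_iff hS1 hS2 hL).1 h)
    (mk_mem_prod (mem_univ 0) (mem_singleton y))).2 hy

theorem snd_apply_mem_Ioo_iff (hS1 : univ ×ˢ Ioo (-1 : ℝ) 1 ⊆ S)
    (hS2 : S ⊆ univ ×ˢ Icc (-1 : ℝ) 1) (hg : MapsLeaves S g) (p : S) :
    (g p : ℝ × ℝ).2 ∈ Ioo (-1 : ℝ) 1 ↔ (p : ℝ × ℝ).2 ∈ Ioo (-1 : ℝ) 1 := by
  refine ⟨fun hgp => by_contra fun hp => ?_, fun hp => ?_⟩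
  · have hpB : (p : ℝ × ℝ) ∈ S ∩ univ ×ˢ {-1, 1} :=
      ⟨p.2, trivial, (Icc_sdiff_Ioo_same (by norm_num)).subset ⟨(hS2 p.2).2, hp⟩⟩
    have hL : IsLeaf S (connectedComponentIn (S ∩ univ ×ˢ {-1, 1}) p) := Or.inr ⟨_, hpB, rfl⟩
    have hM := (hg.image_subset_boundary_iff hS1 hS2 hL).2
      ((connectedComponentIn_subset _ _).trans inter_subset_right)
    exact notMem_Ioo_of_mem_pair (hM ⟨p, mem_connectedComponentIn hpB, rfl⟩).2 hgp
  · obtain ⟨c, hc, hM⟩ := hg.exists_image_horizontal hS1 hS2 hp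
    have hgp : (g p : ℝ × ℝ) ∈ univ ×ˢ {c} := hM ▸ ⟨p, ⟨trivial, rfl⟩, rfl⟩
    exact hgp.2 ▸ hc

theorem snd_apply_eq_iff (hS1 : univ ×ˢ Ioo (-1 : ℝ) 1 ⊆ S)
    (hS2 : S ⊆ univ ×ˢ Icc (-1 : ℝ) 1) (hg : MapsLeaves S g) {p q : S}
    (hq : (q : ℝ × ℝ).2 ∈ Ioo (-1 : ℝ) 1) :
    (g p : ℝ × ℝ).2 = (g q : ℝ × ℝ).2 ↔ (p : ℝ × ℝ).2 = (q : ℝ × ℝ).2 := by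
  obtain ⟨c, -, hM⟩ := hg.exists_image_horizontal hS1 hS2 hq
  have hgq : (g q : ℝ × ℝ) ∈ univ ×ˢ {c} := hM ▸ ⟨q, ⟨trivial, rfl⟩, rfl⟩
  refine ⟨fun h => ?_, fun h => ?_⟩
  · have hgp : (g p : ℝ × ℝ) ∈ univ ×ˢ {c} := ⟨trivial, h.trans hgq.2⟩
    obtain ⟨r, hr, hrp⟩ := hM ▸ hgp
    rw [g.injective (Subtype.val_injective hrp)] at hr
    exact hr.2
  · have hgp : (g p : ℝ × ℝ) ∈ univ ×ˢ {c} := hM ▸ ⟨p, ⟨trivial, h⟩, rfl⟩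
    exact hgp.2.trans hgq.2.symm

theorem exists_bijOn_snd (hS1 : univ ×ˢ Ioo (-1 : ℝ) 1 ⊆ S)
    (hS2 : S ⊆ univ ×ˢ Icc (-1 : ℝ) 1) (hg : MapsLeaves S g) :
    ∃ μ₀ : ℝ → ℝ, ContinuousOn μ₀ (Ioo (-1) 1) ∧ BijOn μ₀ (Ioo (-1) 1) (Ioo (-1) 1) ∧
      ∀ p : S, (p : ℝ × ℝ).2 ∈ Ioo (-1 : ℝ) 1 → (g p : ℝ × ℝ).2 = μ₀ (p : ℝ × ℝ).2 := by
  set G := extend (Subtype.val : S → ℝ × ℝ) (fun p => (g p : ℝ × ℝ).2) 0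
  have hG : ∀ p : S, G p = (g p : ℝ × ℝ).2 := Subtype.val_injective.extend_apply _ _
  have hmem : ∀ y ∈ Ioo (-1 : ℝ) 1, ((0 : ℝ), y) ∈ S := fun y hy => hS1 ⟨trivial, hy⟩
  have hG₀ : ∀ y (hy : y ∈ Ioo (-1 : ℝ) 1), G (0, y) = (g ⟨(0, y), hmem y hy⟩ : ℝ × ℝ).2 :=
    fun y hy => hG ⟨_, hmem y hy⟩
  have hsnd : ∀ p : S, (p : ℝ × ℝ).2 ∈ Ioo (-1 : ℝ) 1 → (g p : ℝ × ℝ).2 = G (0, (p : ℝ × ℝ).2) :=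
    fun p hp => (hG₀ _ hp).symm ▸ (hg.snd_apply_eq_iff hS1 hS2 (q := ⟨_, hmem _ hp⟩) hp).2 rfl
  refine ⟨fun y => G (0, y), ?_, ⟨fun y hy => ?_, fun y hy y' hy' h => ?_, fun c hc => ?_⟩, hsnd⟩
  · have hGc : ContinuousOn G S := by
      rw [continuousOn_iff_continuous_domRestrict, show S.domRestrict G = _ from funext hG]
      exact continuous_snd.comp (continuous_subtype_val.comp g.continuous)
    exact hGc.comp (continuous_const.prodMk continuous_id).continuousOn hmem
  · simpa only [hG₀ y hy] using (hg.snd_apply_mem_Ioo_iff hS1 hS2 _).2 hy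
  · simp only [hG₀ y hy, hG₀ y' hy'] at h
    exact (hg.snd_apply_eq_iff hS1 hS2 (q := ⟨_, hmem y' hy'⟩) hy').1 h
  · set q := g.symm ⟨(0, c), hmem c hc⟩
    have hgq : (g q : ℝ × ℝ).2 = c := by simp [q]
    have hq := (hg.snd_apply_mem_Ioo_iff hS1 hS2 q).1 (hgq ▸ hc)
    exact ⟨_, hq, (hsnd q hq).symm.trans hgq⟩

theorem exists_homeomorph_fst (hS1 : univ ×ˢ Ioo (-1 : ℝ) 1 ⊆ S)
    (hS2 : S ⊆ univ ×ˢ Icc (-1 : ℝ) 1) (hg : MapsLeaves S g) {y : ℝ}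
    (hy : y ∈ Ioo (-1 : ℝ) 1) :
    ∃ e : ℝ ≃ₜ ℝ, ∀ x (hx : (x, y) ∈ S), e x = (g ⟨(x, y), hx⟩ : ℝ × ℝ).1 := by
  set p : ℝ → S := fun x => ⟨(x, y), hS1 ⟨trivial, hy⟩⟩
  have hsnd : ∀ x x', (g (p x) : ℝ × ℝ).2 = (g (p x') : ℝ × ℝ).2 :=
    fun x x' => (hg.snd_apply_eq_iff hS1 hS2 (q := p x') hy).2 rfl
  have hcont : Continuous fun x => (g (p x) : ℝ × ℝ).1 :=
    continuous_fst.comp <| continuous_subtype_val.comp <| g.continuous.comp <|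
      (continuous_id.prodMk continuous_const).subtype_mk _
  have hinj : Injective fun x => (g (p x) : ℝ × ℝ).1 := fun x x' h =>
    congrArg (fun q : S => (q : ℝ × ℝ).1) (g.injective (Subtype.ext (Prod.ext h (hsnd x x'))))
  have hsurj : Surjective fun x => (g (p x) : ℝ × ℝ).1 := by
    intro x'
    have hc := (hg.snd_apply_mem_Ioo_iff hS1 hS2 (p 0)).2 hy
    set r := g.symm ⟨(x', (g (p 0) : ℝ × ℝ).2), hS1 ⟨trivial, hc⟩⟩
    have hr : (r : ℝ × ℝ).2 = y := (hg.snd_apply_eq_iff hS1 hS2 (q := p 0) hy).1 (by simp [r])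
    have hpr : p (r : ℝ × ℝ).1 = r := Subtype.ext (Prod.ext rfl hr.symm)
    exact ⟨(r : ℝ × ℝ).1, by simp [hpr, r]⟩
  obtain ⟨e, he⟩ := hcont.exists_homeomorph_of_bijective ⟨hinj, hsurj⟩
  exact ⟨e, fun x _ => congrFun he x⟩

end MapsLeaves

/-- a homeomorphism `g` of a model strip `S` mapping every leaf of the canonical
foliation onto a leaf has the form `g (x, y) = (λ (x, y), μ y)` where `μ` is a homeomorphism of
`[-1,1]` restricting to a homeomorphism of `(-1,1)`, and `λ` is continuous with `x ↦ λ (x, y)` a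
homeomorphism of `ℝ` for every `y ∈ (-1,1)`. -/
theorem stmt_6 (S : Set (ℝ × ℝ)) (hS : IsModelStrip S) (g : S ≃ₜ S)
    (hleaf : ∀ L : Set (ℝ × ℝ), IsLeaf S L →
      IsLeaf S ((Subtype.val ∘ g) '' (Subtype.val ⁻¹' L))) :
    ∃ (lam : ℝ × ℝ → ℝ) (μ : ℝ → ℝ),
      (∀ p : S, ((g p : ℝ × ℝ)) = (lam (p : ℝ × ℝ), μ ((p : ℝ × ℝ).2))) ∧
      (Continuous fun p : S => lam (p : ℝ × ℝ)) ∧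
      ContinuousOn μ (Set.Icc (-1 : ℝ) 1) ∧
      Set.BijOn μ (Set.Icc (-1 : ℝ) 1) (Set.Icc (-1 : ℝ) 1) ∧
      Set.BijOn μ (Set.Ioo (-1 : ℝ) 1) (Set.Ioo (-1 : ℝ) 1) ∧
      (∃ ν : ℝ → ℝ, ContinuousOn ν (Set.Icc (-1 : ℝ) 1) ∧
        ∀ y ∈ Set.Icc (-1 : ℝ) 1, ν (μ y) = y ∧ μ (ν y) = y) ∧
      (∀ y ∈ Set.Ioo (-1 : ℝ) 1, ∃ e : ℝ ≃ₜ ℝ, ∀ x : ℝ, e x = lam (x, y)) := by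
  obtain ⟨hS1, hS2, -⟩ := hS
  obtain ⟨μ₀, hμ₀c, hμ₀bij, hgμ₀⟩ := MapsLeaves.exists_bijOn_snd hS1 hS2 hleaf
  obtain ⟨μ, hμμ₀, hμmono, hμbij⟩ := hμ₀c.exists_extension_Icc (by norm_num) hμ₀bij
  obtain ⟨hμc, ν, hνc, hνμ⟩ := exists_continuousOn_invOn_of_bijOn hμmono hμbij
  have hgc : Continuous fun p : S => (g p : ℝ × ℝ) := continuous_subtype_val.comp g.continuous
  have hgμ : ∀ p : S, (g p : ℝ × ℝ).2 = μ (p : ℝ × ℝ).2 :=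
    eq_comp_snd_of_eqOn_Ioo hS1 hS2 (continuous_snd.comp hgc) hμc fun p hp =>
      (hgμ₀ p hp).trans (hμμ₀ hp).symm
  set G := extend (Subtype.val : S → ℝ × ℝ) (Subtype.val ∘ g) 0
  have hG : ∀ p : S, G p = g p := Subtype.val_injective.extend_apply _ _
  refine ⟨fun q => (G q).1, μ, fun p => ?_, ?_, hμc, hμbij, hμ₀bij.congr hμμ₀.symm,
    ⟨ν, hνc, fun y hy => ⟨hνμ.1 hy, hνμ.2 hy⟩⟩, fun y hy => ?_⟩
  · exact Prod.ext (congrArg Prod.fst (hG p)).symm (hgμ p)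
  · simpa only [hG] using continuous_fst.comp' hgc
  · obtain ⟨e, he⟩ := MapsLeaves.exists_homeomorph_fst hS1 hS2 hleaf hy
    exact ⟨e, fun x => (he x (hS1 ⟨trivial, hy⟩)).trans (congrArg Prod.fst (hG _)).symm⟩
end

section
/- Let S = ℝ×(-1,1). Let Q be the set of all homeomorphisms h of S of the form h(x,y) = (λ(x,y), μ(y)), where μ is a strictly increasing homeomorphism of (-1,1), λ : S → ℝ is continuous, and for each y ∈ (-1,1) the map x ↦ λ(x,y) is a strictly increasing homeomorphism of ℝ. Let H' ⊆ Q be the subset of those h for which μ = id. Then H' is a strong deformation retract of Q (with the compact-open topology): the map F : Q × [0,1] → Q sending (h,t) to the homeomorphism (x,y) ↦ (λ(x,y), t·y + (1−t)·μ(y)) is continuous, F(h,0) = h for all h ∈ Q, F(h,1) ∈ H' for all h ∈ Q, and F(h,t) = h for all t ∈ [0,1] whenever h ∈ H'. -/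
/-- The open strip `S = ℝ × (-1,1)`. -/
def Strip11 : Set (ℝ × ℝ) := Set.univ ×ˢ Set.Ioo (-1 : ℝ) 1

/-- `Q`: the homeomorphisms `h (x, y) = (λ (x, y), μ y)` of the open strip `S = ℝ × (-1,1)`,
where `μ` is a strictly increasing homeomorphism of `(-1,1)` and each `x ↦ λ (x, y)` is a
strictly increasing homeomorphism of `ℝ`; a subset of `C(S, S)`. -/
def Q11 : Set C(Strip11, Strip11) :=
  {h | (∃ e : Strip11 ≃ₜ Strip11, ∀ p : Strip11, e p = h p) ∧
    (∃ μ : ℝ → ℝ, StrictMonoOn μ (Set.Ioo (-1 : ℝ) 1) ∧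
      Set.BijOn μ (Set.Ioo (-1 : ℝ) 1) (Set.Ioo (-1 : ℝ) 1) ∧
      ∀ p : Strip11, ((h p : ℝ × ℝ)).2 = μ ((p : ℝ × ℝ).2)) ∧
    (∀ y : ℝ, ∀ hy : y ∈ Set.Ioo (-1 : ℝ) 1,
      StrictMono (fun x : ℝ =>
        ((h ⟨(x, y), Set.mk_mem_prod (Set.mem_univ x) hy⟩ : ℝ × ℝ)).1) ∧
      Function.Surjective (fun x : ℝ =>
        ((h ⟨(x, y), Set.mk_mem_prod (Set.mem_univ x) hy⟩ : ℝ × ℝ)).1))}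

/-- `H' ⊆ Q`: those `h ∈ Q` with `μ = id`, i.e. preserving the second coordinate. -/
def Hprime11 : Set C(Strip11, Strip11) :=
  {h | h ∈ Q11 ∧ ∀ p : Strip11, ((h p : ℝ × ℝ)).2 = (p : ℝ × ℝ).2}

/-!
Only the second coordinate moves, along the segment from `μ y` to `y`. At time `t` the new vertical
map `ν = t • id + (1 - t) • μ` is again an increasing self-bijection of `(-1, 1)` (onto by the
intermediate value theorem, `μ` being continuous as a monotone bijection of an open interval), and
`F (h, t)` is `h` followed by the homeomorphism `(x, z) ↦ (x, ν (μ⁻¹ z))`, hence lies in `Q`.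
Continuity in `(h, t)` is continuity of evaluation, the strip being locally compact.
-/

open Set

noncomputable def StrictMonoOn.orderIsoOfBijOn {α β : Type*} [LinearOrder α] [Preorder β]
    {f : α → β} {s : Set α} {t : Set β} (hf : StrictMonoOn f s) (hb : BijOn f s t) : s ≃o t :=
  (hf.orderIso f s).trans (OrderIso.setCongr _ _ hb.image_eq)

@[simp]
lemma StrictMonoOn.coe_orderIsoOfBijOn_apply {α β : Type*} [LinearOrder α] [Preorder β]
    {f : α → β} {s : Set α} {t : Set β} (hf : StrictMonoOn f s) (hb : BijOn f s t) (x : s) :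
    (hf.orderIsoOfBijOn hb x : β) = f x :=
  rfl

lemma StrictMonoOn.continuousOn_of_isOpen_image {α β : Type*} [LinearOrder α] [TopologicalSpace α]
    [OrderTopology α] [LinearOrder β] [TopologicalSpace β] [OrderTopology β] [DenselyOrdered β]
    {f : α → β} {s : Set α} (hf : StrictMonoOn f s) (hs : IsOpen s) (hfs : IsOpen (f '' s)) :
    ContinuousOn f s := fun _ ha =>
  (hf.continuousAt_of_image_mem_nhds (hs.mem_nhds ha)
    (hfs.mem_nhds (mem_image_of_mem f ha))).continuousWithinAt

section ConvexCombination

variable {f g : ℝ → ℝ} {s u : Set ℝ} {t : ℝ}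

lemma Set.OrdConnected.convexCombination_mem [s.OrdConnected] {y z : ℝ} (hy : y ∈ s) (hz : z ∈ s)
    (ht₀ : 0 ≤ t) (ht₁ : t ≤ 1) : t * y + (1 - t) * z ∈ s := by
  simpa only [smul_eq_mul] using
    ‹s.OrdConnected›.convex hy hz ht₀ (sub_nonneg.2 ht₁) (add_sub_cancel t 1)

lemma StrictMonoOn.convexCombination (hf : StrictMonoOn f s) (hg : StrictMonoOn g s)
    (ht₀ : 0 ≤ t) (ht₁ : t ≤ 1) : StrictMonoOn (fun y => t * f y + (1 - t) * g y) s := by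
  intro a ha b hb hab
  have hfab := sub_pos.2 (hf ha hb hab)
  have hgab := sub_pos.2 (hg ha hb hab)
  dsimp only
  rcases le_total (f b - f a) (g b - g a) with hle | hle
  · nlinarith [mul_nonneg (sub_nonneg.2 ht₁) (sub_nonneg.2 hle)]
  · nlinarith [mul_nonneg ht₀ (sub_nonneg.2 hle)]

/-- By the intermediate value theorem on the segment between a preimage of `v` under `f` and
one under `g`: monotonicity puts `v` between the values of the combination at those points. -/
lemma Set.SurjOn.convexCombination [s.OrdConnected] (hfs : SurjOn f s u) (hf : MonotoneOn f s)
    (hg : MonotoneOn g s) (hfc : ContinuousOn f s) (hgc : ContinuousOn g s) (hgs : SurjOn g s u)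
    (ht₀ : 0 ≤ t) (ht₁ : t ≤ 1) : SurjOn (fun y => t * f y + (1 - t) * g y) s u := by
  intro v hv
  obtain ⟨c, hc, rfl⟩ := hfs hv
  obtain ⟨d, hd, hdc⟩ := hgs hv
  have hsub : uIcc c d ⊆ s := OrdConnected.uIcc_subset ‹_› hc hd
  have hcont : ContinuousOn (fun y => t * f y + (1 - t) * g y) (uIcc c d) :=
    ((continuousOn_const.mul hfc).add (continuousOn_const.mul hgc)).mono hsub
  have hbetween : f c ∈ uIcc (t * f c + (1 - t) * g c) (t * f d + (1 - t) * g d) := by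
    rcases le_total c d with hcd | hdc'
    · have hg' := hg hc hd hcd
      have hf' := hf hc hd hcd
      exact Icc_subset_uIcc ⟨by nlinarith, by nlinarith⟩
    · have hg' := hg hd hc hdc'
      have hf' := hf hd hc hdc'
      exact Icc_subset_uIcc' ⟨by nlinarith, by nlinarith⟩
  obtain ⟨y, hy, hyv⟩ := intermediate_value_uIcc hcont hbetween
  exact ⟨y, hsub hy, hyv⟩

lemma Set.BijOn.convexCombination (hs : IsOpen s) [s.OrdConnected] (hf : StrictMonoOn f s)
    (hfb : BijOn f s s) (hg : StrictMonoOn g s) (hgb : BijOn g s s) (ht₀ : 0 ≤ t) (ht₁ : t ≤ 1) :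
    BijOn (fun y => t * f y + (1 - t) * g y) s s := by
  refine ⟨fun y hy => OrdConnected.convexCombination_mem (hfb.mapsTo hy) (hgb.mapsTo hy) ht₀ ht₁,
    (hf.convexCombination hg ht₀ ht₁).injOn,
    hfb.surjOn.convexCombination hf.monotoneOn hg.monotoneOn ?_ ?_ hgb.surjOn ht₀ ht₁⟩
  · exact hf.continuousOn_of_isOpen_image hs (by rwa [hfb.image_eq])
  · exact hg.continuousOn_of_isOpen_image hs (by rwa [hgb.image_eq])

end ConvexCombination

namespace Strip11

lemma isOpen : IsOpen Strip11 := isOpen_univ.prod isOpen_Ioo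

instance : LocallyCompactSpace Strip11 := isOpen.locallyCompactSpace

def homeomorphProd : Strip11 ≃ₜ ℝ × Ioo (-1 : ℝ) 1 :=
  (Homeomorph.Set.prod univ (Ioo (-1 : ℝ) 1)).trans
    ((Homeomorph.Set.univ ℝ).prodCongr (Homeomorph.refl _))

def mapSnd (φ : Ioo (-1 : ℝ) 1 ≃ₜ Ioo (-1 : ℝ) 1) : Strip11 ≃ₜ Strip11 :=
  (homeomorphProd.trans ((Homeomorph.refl ℝ).prodCongr φ)).trans homeomorphProd.symm

lemma coe_mapSnd_apply (φ : Ioo (-1 : ℝ) 1 ≃ₜ Ioo (-1 : ℝ) 1) (p : Strip11) :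
    (mapSnd φ p : ℝ × ℝ) = ((p : ℝ × ℝ).1, (φ ⟨(p : ℝ × ℝ).2, p.2.2⟩ : ℝ)) :=
  rfl

lemma exists_homeomorph_fst_snd {h : C(Strip11, Strip11)} (e : Strip11 ≃ₜ Strip11)
    (he : ∀ p, e p = h p) {μ ν : ℝ → ℝ} (hμ : StrictMonoOn μ (Ioo (-1 : ℝ) 1))
    (hμb : BijOn μ (Ioo (-1 : ℝ) 1) (Ioo (-1 : ℝ) 1)) (hν : StrictMonoOn ν (Ioo (-1 : ℝ) 1))
    (hνb : BijOn ν (Ioo (-1 : ℝ) 1) (Ioo (-1 : ℝ) 1))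
    (hhμ : ∀ p : Strip11, (h p : ℝ × ℝ).2 = μ (p : ℝ × ℝ).2) :
    ∃ e' : Strip11 ≃ₜ Strip11, ∀ p, (e' p : ℝ × ℝ) = ((h p : ℝ × ℝ).1, ν (p : ℝ × ℝ).2) := by
  set χ := ((hμ.orderIsoOfBijOn hμb).symm.trans (hν.orderIsoOfBijOn hνb)).toHomeomorph
  refine ⟨e.trans (mapSnd χ), fun p => ?_⟩
  have hμp : (⟨(h p : ℝ × ℝ).2, (h p).2.2⟩ : Ioo (-1 : ℝ) 1) =
      hμ.orderIsoOfBijOn hμb ⟨(p : ℝ × ℝ).2, p.2.2⟩ := Subtype.ext (hhμ p)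
  rw [Homeomorph.trans_apply, he, coe_mapSnd_apply, hμp]
  simp [χ]

noncomputable def straightenSnd : C(C(Strip11, Strip11) × Icc (0 : ℝ) 1, C(Strip11, Strip11)) :=
  ContinuousMap.curry
    { toFun := fun q => ⟨(((q.1.1 q.2 : Strip11) : ℝ × ℝ).1,
          q.1.2 * (q.2 : ℝ × ℝ).2 + (1 - q.1.2) * (q.1.1 q.2 : ℝ × ℝ).2),
        mem_univ _, OrdConnected.convexCombination_mem q.2.2.2 (q.1.1 q.2).2.2 q.1.2.2.1 q.1.2.2.2⟩
      continuous_toFun := by fun_prop }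

lemma coe_straightenSnd_apply (h : C(Strip11, Strip11)) (t : Icc (0 : ℝ) 1) (p : Strip11) :
    (straightenSnd (h, t) p : ℝ × ℝ) =
      ((h p : ℝ × ℝ).1, t * (p : ℝ × ℝ).2 + (1 - t) * (h p : ℝ × ℝ).2) :=
  rfl

lemma straightenSnd_zero (h : C(Strip11, Strip11)) : straightenSnd (h, 0) = h := by
  ext p : 1
  exact Subtype.ext (Prod.ext rfl (by simp [coe_straightenSnd_apply]))

lemma straightenSnd_eq_self_of_snd_eq {h : C(Strip11, Strip11)}
    (hh : ∀ p : Strip11, (h p : ℝ × ℝ).2 = (p : ℝ × ℝ).2) (t : Icc (0 : ℝ) 1) :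
    straightenSnd (h, t) = h := by
  ext p : 1
  exact Subtype.ext (Prod.ext rfl (by rw [coe_straightenSnd_apply, hh p]; ring))

lemma snd_straightenSnd_one (h : C(Strip11, Strip11)) (p : Strip11) :
    (straightenSnd (h, 1) p : ℝ × ℝ).2 = (p : ℝ × ℝ).2 := by
  simp [coe_straightenSnd_apply]

lemma straightenSnd_mem_Q11 {h : C(Strip11, Strip11)} (hh : h ∈ Q11) (t : Icc (0 : ℝ) 1) :
    straightenSnd (h, t) ∈ Q11 := by
  obtain ⟨⟨e, he⟩, ⟨μ, hμ, hμb, hhμ⟩, hfst⟩ := hh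
  have hν := StrictMonoOn.convexCombination strictMonoOn_id hμ t.2.1 t.2.2
  have hνb := BijOn.convexCombination isOpen_Ioo strictMonoOn_id (bijOn_id _) hμ hμb t.2.1 t.2.2
  refine ⟨?_, ⟨_, hν, hνb, fun p => by simp [coe_straightenSnd_apply, hhμ]⟩, hfst⟩
  obtain ⟨e', he'⟩ := exists_homeomorph_fst_snd e he hμ hμb hν hνb hhμ
  exact ⟨e', fun p => Subtype.ext <| by simp [he', coe_straightenSnd_apply, hhμ]⟩

end Strip11

/-- `H'` is a strong deformation retract of `Q` (compact-open topology): the map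
`F` sending `(h, t)` to `(x, y) ↦ (λ (x, y), t·y + (1-t)·μ y)` is continuous, `F (h, 0) = h`,
`F (h, 1) ∈ H'`, and `F (h, t) = h` for all `t` whenever `h ∈ H'`. -/
theorem stmt_11 :
    ∃ F : Q11 × Set.Icc (0 : ℝ) 1 → Q11,
      Continuous F ∧
      (∀ (h : Q11) (t : Set.Icc (0 : ℝ) 1) (p : Strip11),
        (((F (h, t) : C(Strip11, Strip11)) p : ℝ × ℝ)) =
          (((h : C(Strip11, Strip11)) p : ℝ × ℝ).1,
            (t : ℝ) * (p : ℝ × ℝ).2 + (1 - (t : ℝ)) * ((h : C(Strip11, Strip11)) p : ℝ × ℝ).2)) ∧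
      (∀ h : Q11, F (h, ⟨0, by norm_num⟩) = h) ∧
      (∀ h : Q11, (F (h, ⟨1, by norm_num⟩) : C(Strip11, Strip11)) ∈ Hprime11) ∧
      (∀ h : Q11, (h : C(Strip11, Strip11)) ∈ Hprime11 →
        ∀ t : Set.Icc (0 : ℝ) 1, F (h, t) = h) := by
  open Strip11 in
  refine ⟨fun q => ⟨straightenSnd (q.1, q.2), straightenSnd_mem_Q11 q.1.2 q.2⟩,
    (straightenSnd.continuous.comp (continuous_subtype_val.prodMap continuous_id)).subtype_mk _,
    fun _ _ _ => rfl, fun h => Subtype.ext (straightenSnd_zero h),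
    fun h => ⟨straightenSnd_mem_Q11 h.2 _, snd_straightenSnd_one h⟩,
    fun h hh t => Subtype.ext (straightenSnd_eq_self_of_snd_eq hh.2 t)⟩
end
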